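/- For all s_1, s_2 > 0, the span program P_OR(s_1,s_2) computes the two-bit OR function OR_2, and its witness sizes with costs (√s_1, √s_2) are: wsize_{(√s_1,√s_2)}(P_OR(s_1,s_2), x) = √(s_1+s_2) for x ∈ {(0,0), (1,0), (0,1)}, and wsize_{(√s_1,√s_2)}(P_OR(s_1,s_2), (1,1)) = √(s_1+s_2)/2. -/

import Mathlib

noncomputable section

/-- A span program on input bits indexed by `ι`, with a finite-dimensional complex inner
product space `V`, a target vector, free input vectors indexed by `Ifree`, and input
vectors indexed by `Iin j b` (available when the `j`-th input bit equals `b`). -/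
structure SpanProgram (ι : Type) where
  V : Type
  [nacg : NormedAddCommGroup V]
  [ips : InnerProductSpace ℂ V]
  [fd : FiniteDimensional ℂ V]
  Ifree : Type
  [freeFin : Fintype Ifree]
  [freeDec : DecidableEq Ifree]
  Iin : ι → Bool → Type
  [inFin : ∀ j b, Fintype (Iin j b)]
  [inDec : ∀ j b, DecidableEq (Iin j b)]
  target : V
  vfree : Ifree → V
  vin : ∀ j b, Iin j b → V

attribute [instance] SpanProgram.nacg SpanProgram.ips SpanProgram.fd
attribute [instance] SpanProgram.freeFin SpanProgram.freeDec
attribute [instance] SpanProgram.inFin SpanProgram.inDec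

namespace SpanProgram

variable {ι : Type} [Fintype ι] [DecidableEq ι]

/-- The index set `I = I_free ∪ ⋃_{j,b} I_{j,b}` of all input vectors. -/
abbrev Idx (P : SpanProgram ι) : Type := P.Ifree ⊕ Σ j : ι, Σ b : Bool, P.Iin j b

/-- All input vectors, as a single family over `Idx`. -/
def vec (P : SpanProgram ι) : P.Idx → P.V :=
  Sum.elim P.vfree (fun p => P.vin p.1 p.2.1 p.2.2)

/-- `P` evaluates to true on `x` iff the target lies in the span of the available
input vectors (the free ones together with those indexed by `I_{j, x_j}`). -/
def spanned (P : SpanProgram ι) (x : ι → Bool) : Prop :=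
  P.target ∈ Submodule.span ℂ
    (Set.range P.vfree ∪ ⋃ j : ι, Set.range (P.vin j (x j)))

/-- The boolean function computed by `P`. -/
def fP (P : SpanProgram ι) (x : ι → Bool) : Bool :=
  letI := Classical.propDecidable (P.spanned x)
  decide (P.spanned x)

/-- `w : ℂ^I` is a witness for `f_P(x) = 1`: it is supported on available input vectors,
and the input vectors weighted by `w` sum to the target. -/
def IsWitness1 (P : SpanProgram ι) (x : ι → Bool) (w : P.Idx → ℂ) : Prop :=
  (∀ (j : ι) (b : Bool) (i : P.Iin j b), b ≠ x j → w (.inr ⟨j, b, i⟩) = 0) ∧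
  ∑ i : P.Idx, w i • P.vec i = P.target

/-- `w' ∈ V` is a witness for `f_P(x) = 0`: it has unit inner product with the target and
is orthogonal to all available input vectors. -/
def IsWitness0 (P : SpanProgram ι) (x : ι → Bool) (w' : P.V) : Prop :=
  (inner ℂ P.target w' : ℂ) = 1 ∧
  (∀ i : P.Ifree, (inner ℂ (P.vfree i) w' : ℂ) = 0) ∧
  (∀ (j : ι) (i : P.Iin j (x j)), (inner ℂ (P.vin j (x j) i) w' : ℂ) = 0)

/-- `‖S|w⟩‖²`, the size of a `1`-witness `w` with costs `s`. -/
def wval1 (P : SpanProgram ι) (s : ι → ℝ) (w : P.Idx → ℂ) : ℝ :=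
  ∑ j : ι, ∑ b : Bool, ∑ i : P.Iin j b, s j * ‖w (.inr ⟨j, b, i⟩)‖ ^ 2

/-- `1 + ‖S^f|w⟩‖²`, the full size of a `1`-witness `w` with costs `s`. -/
def wval1f (P : SpanProgram ι) (s : ι → ℝ) (w : P.Idx → ℂ) : ℝ :=
  1 + (∑ i : P.Ifree, ‖w (.inl i)‖ ^ 2) + P.wval1 s w

/-- `‖S A†|w'⟩‖²`, the size of a `0`-witness `w'` with costs `s`. -/
def wval0 (P : SpanProgram ι) (s : ι → ℝ) (w' : P.V) : ℝ :=
  ∑ j : ι, ∑ b : Bool, ∑ i : P.Iin j b, s j * ‖(inner ℂ (P.vin j b i) w' : ℂ)‖ ^ 2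

/-- `‖|w'⟩‖² + ‖S A†|w'⟩‖²`, the full size of a `0`-witness `w'` with costs `s`. -/
def wval0f (P : SpanProgram ι) (s : ι → ℝ) (w' : P.V) : ℝ :=
  ‖w'‖ ^ 2 + P.wval0 s w'

/-- The witness size of `P` on input `x` with costs `s`. -/
def wsizex (P : SpanProgram ι) (s : ι → ℝ) (x : ι → Bool) : ℝ :=
  if P.fP x then sInf { r | ∃ w, P.IsWitness1 x w ∧ r = P.wval1 s w }
  else sInf { r | ∃ w', P.IsWitness0 x w' ∧ r = P.wval0 s w' }

/-- The witness size of `P` with costs `s`. -/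
def wsize (P : SpanProgram ι) (s : ι → ℝ) : ℝ := ⨆ x : ι → Bool, P.wsizex s x

/-- The full witness size of `P` on input `x` with costs `s`. -/
def wsizefx (P : SpanProgram ι) (s : ι → ℝ) (x : ι → Bool) : ℝ :=
  if P.fP x then sInf { r | ∃ w, P.IsWitness1 x w ∧ r = P.wval1f s w }
  else sInf { r | ∃ w', P.IsWitness0 x w' ∧ r = P.wval0f s w' }

/-- The full witness size of `P` with costs `s`. -/
def wsizef (P : SpanProgram ι) (s : ι → ℝ) : ℝ := ⨆ x : ι → Bool, P.wsizefx s x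

end SpanProgram

end

instance (b : Bool) : Fintype (cond b Unit Empty) :=
  match b with
  | true => inferInstanceAs (Fintype Unit)
  | false => inferInstanceAs (Fintype Empty)

instance (b : Bool) : DecidableEq (cond b Unit Empty) :=
  match b with
  | true => inferInstanceAs (DecidableEq Unit)
  | false => inferInstanceAs (DecidableEq Empty)

/-- The span program `P_OR(s₁,s₂)` computing two-bit OR: the space is `ℂ`, the target is
`1`, and the input vectors are `(s₁/s_p)^{1/4} ∈ I_{1,1}` and `(s₂/s_p)^{1/4} ∈ I_{2,1}`
with `s_p = s₁ + s₂` and `I_free = I_{1,0} = I_{2,0} = ∅`. -/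
noncomputable def POR (s1 s2 : ℝ) : SpanProgram (Fin 2) where
  V := ℂ
  Ifree := Empty
  Iin := fun _ b => cond b Unit Empty
  target := 1
  vfree := Empty.elim
  vin := fun j b => match b with
    | true => fun _ => (↑(((if j = 0 then s1 else s2) / (s1 + s2)) ^ ((1 : ℝ)/4)) : ℂ)
    | false => fun i => i.elim

/-!
The program lives in `ℂ` with input vectors `a_j = (s_j / s_p)^{1/4}`, so the cost `√s_j` equals
`√s_p a_j²`. A `0`-witness must be `w' = 1`, of size `√s_p (a₀⁴ + a₁⁴) = √s_p`. A `1`-witness `w`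
satisfies `w₀ a₀ + w₁ a₁ = 1`, so `u_j = a_j |w_j|` has `u₀ + u₁ ≥ 1`, and its size is
`√s_p (u₀² + u₁²)`. The minimum of `u₀² + u₁²` is `1` when only one bit is set and `1/2`,
at `u = (1/2, 1/2)`, when both are.
-/

namespace SpanProgram

variable {ι : Type} {P : SpanProgram ι} {x : ι → Bool}

theorem spanned_of_isWitness1 [Fintype ι] {w : P.Idx → ℂ} (hw : P.IsWitness1 x w) :
    P.spanned x := by
  rw [spanned, ← hw.2]
  refine Submodule.sum_mem _ fun i _ => ?_
  rcases i with i | ⟨j, b, i⟩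
  · exact Submodule.smul_mem _ _ (Submodule.subset_span (Or.inl ⟨i, rfl⟩))
  · by_cases hb : b = x j
    · subst hb
      exact Submodule.smul_mem _ _
        (Submodule.subset_span (Or.inr (Set.mem_iUnion.2 ⟨j, i, rfl⟩)))
    · rw [hw.1 j b i hb, zero_smul]
      exact Submodule.zero_mem _

/-- The available input vectors all lie in `(ℂ ∙ w')ᗮ`, which misses the target. -/
theorem not_spanned_of_isWitness0 {w' : P.V} (hw : P.IsWitness0 x w') : ¬ P.spanned x := by
  intro hs
  have htarget : P.target ∈ (ℂ ∙ w')ᗮ := by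
    refine Submodule.span_le.2 ?_ hs
    rintro v (⟨i, rfl⟩ | hv)
    · exact Submodule.mem_orthogonal_singleton_iff_inner_left.2 (hw.2.1 i)
    · obtain ⟨j, i, rfl⟩ := Set.mem_iUnion.1 hv
      exact Submodule.mem_orthogonal_singleton_iff_inner_left.2 (hw.2.2 j i)
  rw [Submodule.mem_orthogonal_singleton_iff_inner_left, hw.1] at htarget
  exact one_ne_zero htarget

theorem fP_eq_true_of_isWitness1 [Fintype ι] {w : P.Idx → ℂ} (hw : P.IsWitness1 x w) :
    P.fP x = true := by
  simp [fP, spanned_of_isWitness1 hw]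

theorem fP_eq_false_of_isWitness0 {w' : P.V} (hw : P.IsWitness0 x w') : P.fP x = false := by
  simp [fP, not_spanned_of_isWitness0 hw]

theorem wsizex_eq_of_isLeast_wval1 [Fintype ι] {s : ι → ℝ} {r : ℝ} (hx : P.fP x = true)
    (h : IsLeast {r | ∃ w, P.IsWitness1 x w ∧ r = P.wval1 s w} r) : P.wsizex s x = r := by
  rw [wsizex, if_pos hx, h.csInf_eq]

theorem wsizex_eq_of_isLeast_wval0 [Fintype ι] {s : ι → ℝ} {r : ℝ} (hx : P.fP x = false)
    (h : IsLeast {r | ∃ w', P.IsWitness0 x w' ∧ r = P.wval0 s w'} r) : P.wsizex s x = r := by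
  rw [wsizex, if_neg (by simp [hx]), h.csInf_eq]

end SpanProgram

section POR

variable {s1 s2 : ℝ}

lemma POR_sum_Iin_true {M : Type*} [AddCommMonoid M] (j : Fin 2)
    (f : (POR s1 s2).Iin j true → M) : ∑ i, f i = f () :=
  Fintype.sum_unique (ι := Unit) f

lemma POR_sum_Iin_false {M : Type*} [AddCommMonoid M] (j : Fin 2)
    (f : (POR s1 s2).Iin j false → M) : ∑ i, f i = 0 :=
  Fintype.sum_empty (ι := Empty) f

lemma POR_sum_Idx {M : Type*} [AddCommMonoid M] (f : (POR s1 s2).Idx → M) :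
    ∑ i, f i = f (.inr ⟨0, true, ()⟩) + f (.inr ⟨1, true, ()⟩) := by
  have : IsEmpty (POR s1 s2).Ifree := inferInstanceAs (IsEmpty Empty)
  simp only [Fintype.sum_sum_type, ← Finset.univ_sigma_univ, Finset.sum_sigma,
    Fin.sum_univ_two, Fintype.sum_bool, POR_sum_Iin_true, POR_sum_Iin_false,
    Finset.univ_eq_empty, Finset.sum_empty, zero_add, add_zero]

noncomputable def porInput (s1 s2 : ℝ) (j : Fin 2) : ℝ :=
  ((if j = 0 then s1 else s2) / (s1 + s2)) ^ ((1 : ℝ) / 4)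

lemma porInput_pos (h1 : 0 < s1) (h2 : 0 < s2) (j : Fin 2) : 0 < porInput s1 s2 j := by
  refine Real.rpow_pos_of_pos (div_pos ?_ (add_pos h1 h2)) _
  split_ifs <;> assumption

lemma porInput_pow_four (h1 : 0 < s1) (h2 : 0 < s2) (j : Fin 2) :
    porInput s1 s2 j ^ 4 = (if j = 0 then s1 else s2) / (s1 + s2) := by
  have hnonneg : 0 ≤ (if j = 0 then s1 else s2) / (s1 + s2) := by
    refine div_nonneg ?_ (add_pos h1 h2).le
    split_ifs <;> positivity
  rw [porInput, ← Real.rpow_natCast, ← Real.rpow_mul hnonneg]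
  norm_num

lemma porInput_pow_four_add (h1 : 0 < s1) (h2 : 0 < s2) :
    porInput s1 s2 0 ^ 4 + porInput s1 s2 1 ^ 4 = 1 := by
  rw [porInput_pow_four h1 h2, porInput_pow_four h1 h2, if_pos rfl, if_neg one_ne_zero,
    ← add_div, div_self (add_pos h1 h2).ne']

lemma POR_cost_eq (h1 : 0 < s1) (h2 : 0 < s2) (j : Fin 2) :
    ![Real.sqrt s1, Real.sqrt s2] j = Real.sqrt (s1 + s2) * porInput s1 s2 j ^ 2 := by
  have hsq : porInput s1 s2 j ^ 2 = Real.sqrt ((if j = 0 then s1 else s2) / (s1 + s2)) := by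
    rw [← porInput_pow_four h1 h2, show 4 = 2 * 2 from rfl, pow_mul,
      Real.sqrt_sq (by positivity)]
  rw [hsq, Real.sqrt_div' _ (add_pos h1 h2).le,
    mul_div_cancel₀ _ (Real.sqrt_pos.2 (add_pos h1 h2)).ne']
  fin_cases j <;> rfl

noncomputable def porWitness (s1 s2 : ℝ) (t : Fin 2 → ℝ) : (POR s1 s2).Idx → ℂ :=
  Sum.elim (fun _ => 0) fun p => (t p.1 / porInput s1 s2 p.1 : ℝ)

lemma POR_isWitness1_porWitness (h1 : 0 < s1) (h2 : 0 < s2) {x : Fin 2 → Bool}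
    {t : Fin 2 → ℝ} (ht : t 0 + t 1 = 1) (ht_supp : ∀ j, x j = false → t j = 0) :
    (POR s1 s2).IsWitness1 x (porWitness s1 s2 t) := by
  refine ⟨fun j b i hb => ?_, ?_⟩
  · cases b
    · exact (i : Empty).elim
    · simp [porWitness, ht_supp j (Bool.eq_false_iff.2 hb.symm)]
  · rw [POR_sum_Idx]
    change ((t 0 / porInput s1 s2 0 : ℝ) : ℂ) * (porInput s1 s2 0 : ℂ)
      + ((t 1 / porInput s1 s2 1 : ℝ) : ℂ) * (porInput s1 s2 1 : ℂ) = 1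
    rw [← Complex.ofReal_mul, ← Complex.ofReal_mul,
      div_mul_cancel₀ _ (porInput_pos h1 h2 0).ne',
      div_mul_cancel₀ _ (porInput_pos h1 h2 1).ne', ← Complex.ofReal_add, ht,
      Complex.ofReal_one]

lemma POR_wval1 (h1 : 0 < s1) (h2 : 0 < s2) (w : (POR s1 s2).Idx → ℂ) :
    (POR s1 s2).wval1 ![Real.sqrt s1, Real.sqrt s2] w = Real.sqrt (s1 + s2) *
      ((porInput s1 s2 0 * ‖w (.inr ⟨0, true, ()⟩)‖) ^ 2
        + (porInput s1 s2 1 * ‖w (.inr ⟨1, true, ()⟩)‖) ^ 2) := by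
  simp only [SpanProgram.wval1, Fin.sum_univ_two, Fintype.sum_bool, POR_sum_Iin_true,
    POR_sum_Iin_false, add_zero, POR_cost_eq h1 h2]
  ring

lemma POR_wval1_porWitness (h1 : 0 < s1) (h2 : 0 < s2) (t : Fin 2 → ℝ) :
    (POR s1 s2).wval1 ![Real.sqrt s1, Real.sqrt s2] (porWitness s1 s2 t)
      = Real.sqrt (s1 + s2) * (t 0 ^ 2 + t 1 ^ 2) := by
  have hweight (j : Fin 2) :
      (porInput s1 s2 j * ‖porWitness s1 s2 t (.inr ⟨j, true, ()⟩)‖) ^ 2 = t j ^ 2 := by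
    simp only [porWitness, Sum.elim_inr, Complex.norm_real, Real.norm_eq_abs, mul_pow,
      sq_abs, div_pow]
    field_simp [(porInput_pos h1 h2 j).ne']
  rw [POR_wval1 h1 h2, hweight, hweight]

/-- Triangle inequality applied to `w₀ a₀ + w₁ a₁ = 1`. -/
lemma POR_one_le_of_isWitness1 (h1 : 0 < s1) (h2 : 0 < s2) {x : Fin 2 → Bool}
    {w : (POR s1 s2).Idx → ℂ} (hw : (POR s1 s2).IsWitness1 x w) :
    1 ≤ porInput s1 s2 0 * ‖w (.inr ⟨0, true, ()⟩)‖
      + porInput s1 s2 1 * ‖w (.inr ⟨1, true, ()⟩)‖ := by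
  have hsum := hw.2
  rw [POR_sum_Idx] at hsum
  change w (.inr ⟨0, true, ()⟩) * (porInput s1 s2 0 : ℂ)
    + w (.inr ⟨1, true, ()⟩) * (porInput s1 s2 1 : ℂ) = 1 at hsum
  calc 1 = ‖w (.inr ⟨0, true, ()⟩) * (porInput s1 s2 0 : ℂ)
        + w (.inr ⟨1, true, ()⟩) * (porInput s1 s2 1 : ℂ)‖ := by rw [hsum, norm_one]
    _ ≤ _ := norm_add_le _ _
    _ = _ := by
      simp only [norm_mul, Complex.norm_real, Real.norm_eq_abs,
        abs_of_pos (porInput_pos h1 h2 _), mul_comm]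

lemma POR_isLeast_wval1 (h1 : 0 < s1) (h2 : 0 < s2) {x : Fin 2 → Bool} {m : ℝ}
    (t : Fin 2 → ℝ) (ht : t 0 + t 1 = 1) (ht_supp : ∀ j, x j = false → t j = 0)
    (htm : t 0 ^ 2 + t 1 ^ 2 = m)
    (hm : ∀ u : Fin 2 → ℝ, 1 ≤ u 0 + u 1 → (∀ j, x j = false → u j = 0) →
      m ≤ u 0 ^ 2 + u 1 ^ 2) :
    IsLeast {r | ∃ w, (POR s1 s2).IsWitness1 x w ∧
      r = (POR s1 s2).wval1 ![Real.sqrt s1, Real.sqrt s2] w} (Real.sqrt (s1 + s2) * m) := by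
  refine ⟨⟨porWitness s1 s2 t, POR_isWitness1_porWitness h1 h2 ht ht_supp, ?_⟩, ?_⟩
  · rw [POR_wval1_porWitness h1 h2, htm]
  · rintro r ⟨w, hw, rfl⟩
    rw [POR_wval1 h1 h2]
    refine mul_le_mul_of_nonneg_left ?_ (Real.sqrt_nonneg _)
    refine hm (fun j => porInput s1 s2 j * ‖w (.inr ⟨j, true, ()⟩)‖)
      (POR_one_le_of_isWitness1 h1 h2 hw) fun j hj => ?_
    rw [hw.1 j true () (by simp [hj]), norm_zero, mul_zero]

lemma POR_eq_one_of_isWitness0 {x : Fin 2 → Bool} {w' : ℂ}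
    (hw : (POR s1 s2).IsWitness0 x w') : w' = 1 := by
  have h : (inner ℂ (1 : ℂ) w' : ℂ) = 1 := hw.1
  simpa using h

lemma POR_isWitness0_one {x : Fin 2 → Bool} (hx : ∀ j, x j = false) :
    (POR s1 s2).IsWitness0 x (1 : ℂ) := by
  refine ⟨(inner_self_eq_norm_sq_to_K (𝕜 := ℂ) (1 : ℂ)).trans (by simp),
    fun i => (i : Empty).elim, fun j i => ?_⟩
  rw [hx j] at i
  exact (i : Empty).elim

lemma POR_wval0 (h1 : 0 < s1) (h2 : 0 < s2) (w' : ℂ) :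
    (POR s1 s2).wval0 ![Real.sqrt s1, Real.sqrt s2] w' = Real.sqrt (s1 + s2) * ‖w'‖ ^ 2 := by
  have hterm (j : Fin 2) :
      ![Real.sqrt s1, Real.sqrt s2] j * ‖(inner ℂ ((POR s1 s2).vin j true ()) w' : ℂ)‖ ^ 2
        = Real.sqrt (s1 + s2) * porInput s1 s2 j ^ 4 * ‖w'‖ ^ 2 := by
    have hinner :
        (inner ℂ ((POR s1 s2).vin j true ()) w' : ℂ) = (porInput s1 s2 j : ℂ) * w' := by
      change (inner ℂ (porInput s1 s2 j : ℂ) w' : ℂ) = _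
      simp [mul_comm]
    rw [hinner, norm_mul, Complex.norm_real, Real.norm_eq_abs,
      abs_of_pos (porInput_pos h1 h2 j), POR_cost_eq h1 h2]
    ring
  simp only [SpanProgram.wval0, Fin.sum_univ_two, Fintype.sum_bool, POR_sum_Iin_true,
    POR_sum_Iin_false, add_zero, hterm]
  linear_combination (Real.sqrt (s1 + s2) * ‖w'‖ ^ 2) * porInput_pow_four_add h1 h2

lemma POR_isLeast_wval0 (h1 : 0 < s1) (h2 : 0 < s2) {x : Fin 2 → Bool}
    (hx : ∀ j, x j = false) :
    IsLeast {r | ∃ w', (POR s1 s2).IsWitness0 x w' ∧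
      r = (POR s1 s2).wval0 ![Real.sqrt s1, Real.sqrt s2] w'} (Real.sqrt (s1 + s2)) := by
  refine ⟨⟨(1 : ℂ), POR_isWitness0_one hx, ?_⟩, ?_⟩
  · exact ((POR_wval0 h1 h2 1).trans (by simp)).symm
  · rintro r ⟨w', hw, rfl⟩
    exact ((POR_wval0 h1 h2 w').trans (by simp [POR_eq_one_of_isWitness0 hw])).ge

lemma POR_fP (h1 : 0 < s1) (h2 : 0 < s2) (x : Fin 2 → Bool) :
    (POR s1 s2).fP x = (x 0 || x 1) := by
  have h_witness1 (t : Fin 2 → ℝ) (ht : t 0 + t 1 = 1)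
      (ht_supp : ∀ j, x j = false → t j = 0) : (POR s1 s2).fP x = true :=
    SpanProgram.fP_eq_true_of_isWitness1 (POR_isWitness1_porWitness h1 h2 ht ht_supp)
  cases hx0 : x 0 <;> cases hx1 : x 1
  · refine SpanProgram.fP_eq_false_of_isWitness0 (POR_isWitness0_one fun j => ?_)
    fin_cases j <;> assumption
  all_goals refine h_witness1 (if x 0 then ![1, 0] else ![0, 1]) (by simp [hx0]) fun j hj => ?_
  all_goals fin_cases j <;> simp_all

end POR

/-- `P_OR(s₁,s₂)` computes `OR₂` and its witness sizes with costs
`(√s₁, √s₂)` are `√(s₁+s₂)` on inputs `00, 10, 01` and `√(s₁+s₂)/2` on input `11`. -/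
theorem POR_witness_sizes (s1 s2 : ℝ) (h1 : 0 < s1) (h2 : 0 < s2) :
    (∀ x, (POR s1 s2).fP x = (x 0 || x 1)) ∧
    (POR s1 s2).wsizex ![Real.sqrt s1, Real.sqrt s2] ![false, false]
      = Real.sqrt (s1 + s2) ∧
    (POR s1 s2).wsizex ![Real.sqrt s1, Real.sqrt s2] ![true, false]
      = Real.sqrt (s1 + s2) ∧
    (POR s1 s2).wsizex ![Real.sqrt s1, Real.sqrt s2] ![false, true]
      = Real.sqrt (s1 + s2) ∧
    (POR s1 s2).wsizex ![Real.sqrt s1, Real.sqrt s2] ![true, true]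
      = Real.sqrt (s1 + s2) / 2 := by
  have hfP := POR_fP h1 h2
  refine ⟨hfP, ?_, ?_, ?_, ?_⟩
  · exact SpanProgram.wsizex_eq_of_isLeast_wval0 (hfP _)
      (POR_isLeast_wval0 h1 h2 fun j => by fin_cases j <;> rfl)
  · rw [← mul_one (Real.sqrt (s1 + s2))]
    refine SpanProgram.wsizex_eq_of_isLeast_wval1 (hfP _) (POR_isLeast_wval1 h1 h2 ![1, 0]
      (by simp) (fun j hj => by fin_cases j <;> simp_all) (by simp) fun u hsum hsupp => ?_)
    have hu1 : u 1 = 0 := hsupp 1 rfl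
    nlinarith
  · rw [← mul_one (Real.sqrt (s1 + s2))]
    refine SpanProgram.wsizex_eq_of_isLeast_wval1 (hfP _) (POR_isLeast_wval1 h1 h2 ![0, 1]
      (by simp) (fun j hj => by fin_cases j <;> simp_all) (by simp) fun u hsum hsupp => ?_)
    have hu0 : u 0 = 0 := hsupp 0 rfl
    nlinarith
  · rw [div_eq_mul_one_div]
    refine SpanProgram.wsizex_eq_of_isLeast_wval1 (hfP _)
      (POR_isLeast_wval1 h1 h2 ![1 / 2, 1 / 2] (by norm_num)
        (fun j hj => by fin_cases j <;> simp_all) (by norm_num) fun u hsum _ => ?_)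
    nlinarith [sq_nonneg (u 0 - u 1)]
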